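/- Dispersive kernel bound: there is a constant C = C(φ) such that for all N > 0, all t ≠ 0 and all r, s ≥ 1, the frequency-localized half-wave kernel K_N(t, r, s) = (2/π) ∫₀^∞ (sin(λ(r−1))/r) · (sin(λ(s−1))/s) · e^{iλt} · ψ̃_N(λ) dλ satisfies |K_N(t, r, s)| ≤ C · N² / |t|. -/

import Mathlib

open MeasureTheory Set
open scoped ENNReal

/-- `ψ_N(λ) = φ(λ/N) − φ(λ/(N/2)) = φ(λ/N) − φ(2λ/N)`. -/
noncomputable def lpPsi (φ : ℝ → ℝ) (N : ℝ) (lam : ℝ) : ℝ :=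
  φ (lam / N) - φ (2 * lam / N)

/-- The fattened cutoff `ψ̃_N = ψ_{N/2} + ψ_N + ψ_{2N}`. -/
noncomputable def lpPsiTilde (φ : ℝ → ℝ) (N : ℝ) (lam : ℝ) : ℝ :=
  lpPsi φ (N / 2) lam + lpPsi φ N lam + lpPsi φ (2 * N) lam

/-- The frequency-localized half-wave kernel
`K_N(t,r,s) = (2/π) ∫₀^∞ (sin(λ(r−1))/r) (sin(λ(s−1))/s) e^{iλt} ψ̃_N(λ) dλ`. -/
noncomputable def halfWaveKernel (φ : ℝ → ℝ) (N t r s : ℝ) : ℂ :=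
  ((2 / Real.pi : ℝ) : ℂ) *
    ∫ lam in Ioi (0 : ℝ),
      ((Real.sin (lam * (r - 1)) / r : ℝ) : ℂ) *
        ((Real.sin (lam * (s - 1)) / s : ℝ) : ℂ) *
        Complex.exp (Complex.I * (lam : ℂ) * (t : ℂ)) *
        ((lpPsiTilde φ N lam : ℝ) : ℂ)

/-! Integrating by parts once in `λ` gains the factor `1/|t|`: the amplitude
`e_λ(r) e_λ(s) ψ̃_N(λ)` vanishes at `λ = 0` and for `λ ≥ 4N`, and on `[0, 4N]` its derivative
is `O(N)` uniformly in `r, s ≥ 1`, because `|e_λ(r)| ≤ λ`, `|∂_λ e_λ(r)| ≤ 1`, `|ψ̃_N| ≤ 3` and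
`|ψ̃_N'| = O(1/N)`. The remaining integral over an interval of length `4N` is therefore `O(N²)`. -/

section OscillatoryIntegral

open Complex

lemma hasDerivAt_inv_mul_cexp_I_mul_mul {t : ℝ} (ht : t ≠ 0) (x : ℝ) :
    HasDerivAt (fun y : ℝ => (I * t)⁻¹ * exp (I * y * t)) (exp (I * x * t)) x := by
  have hIt : I * (t : ℂ) ≠ 0 := mul_ne_zero I_ne_zero (ofReal_ne_zero.mpr ht)
  have hlin : HasDerivAt (fun y : ℝ => I * (y : ℂ) * t) (I * t) x := by
    simpa [mul_comm, mul_left_comm] using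
      ((hasDerivAt_id x).ofReal_comp.const_mul I).mul_const (t : ℂ)
  refine (hlin.cexp.const_mul (I * t)⁻¹).congr_deriv ?_
  rw [mul_comm (exp _), ← mul_assoc, inv_mul_cancel₀ hIt, one_mul]

lemma norm_cexp_I_mul_mul (x t : ℝ) : ‖exp (I * x * t)‖ = 1 := by
  rw [show I * x * t = ((x * t : ℝ) : ℂ) * I by push_cast; ring, norm_exp_ofReal_mul_I]

lemma intervalIntegral_mul_cexp_eq {g g' : ℝ → ℂ} {b t : ℝ} (ht : t ≠ 0)
    (hg : ∀ x ∈ uIcc 0 b, HasDerivAt g (g' x) x) (hg' : IntervalIntegrable g' volume 0 b)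
    (hg0 : g 0 = 0) (hgb : g b = 0) :
    ∫ x in (0 : ℝ)..b, g x * exp (I * x * t)
      = -((I * t)⁻¹ * ∫ x in (0 : ℝ)..b, g' x * exp (I * x * t)) := by
  have hexp : IntervalIntegrable (fun x : ℝ => exp (I * x * t)) volume 0 b :=
    (by fun_prop : Continuous fun x : ℝ => exp (I * x * t)).intervalIntegrable _ _
  rw [intervalIntegral.integral_mul_deriv_eq_deriv_mul hg
    (fun x _ => hasDerivAt_inv_mul_cexp_I_mul_mul ht x) hg' hexp, hg0, hgb,
    ← intervalIntegral.integral_const_mul]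
  simp only [zero_mul, sub_zero, zero_sub, neg_inj]
  congr 1 with x
  ring

theorem norm_integral_Ioi_mul_cexp_le {g g' : ℝ → ℂ} {b t M : ℝ} (hb : 0 ≤ b) (ht : t ≠ 0)
    (hg : ∀ x ∈ Icc 0 b, HasDerivAt g (g' x) x) (hg' : IntervalIntegrable g' volume 0 b)
    (hg0 : g 0 = 0) (hgb : ∀ x, b ≤ x → g x = 0) (hM : ∀ x ∈ Ioc 0 b, ‖g' x‖ ≤ M) :
    ‖∫ x in Ioi 0, g x * exp (I * x * t)‖ ≤ M * b / |t| := by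
  have htrunc : ∫ x in Ioi 0, g x * exp (I * x * t) = ∫ x in (0 : ℝ)..b, g x * exp (I * x * t) := by
    rw [intervalIntegral.integral_of_le hb]
    refine setIntegral_eq_of_subset_of_forall_sdiff_eq_zero measurableSet_Ioi Ioc_subset_Ioi_self ?_
    rintro x ⟨hx0, hxb⟩
    simp [hgb x (le_of_not_ge fun h => hxb ⟨hx0, h⟩)]
  have hbound : ‖∫ x in (0 : ℝ)..b, g' x * exp (I * x * t)‖ ≤ M * b := by
    have hnorm : ∀ x ∈ uIoc 0 b, ‖g' x * exp (I * x * t)‖ ≤ M := fun x hx => by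
      rw [uIoc_of_le hb] at hx
      rw [norm_mul, norm_cexp_I_mul_mul, mul_one]
      exact hM x hx
    simpa [abs_of_nonneg hb] using intervalIntegral.norm_integral_le_of_norm_le_const hnorm
  rw [htrunc, intervalIntegral_mul_cexp_eq ht (by rwa [uIcc_of_le hb]) hg' hg0 (hgb b le_rfl),
    norm_neg, norm_mul, norm_inv, norm_mul, norm_I, one_mul, norm_real, Real.norm_eq_abs,
    inv_mul_eq_div]
  gcongr

end OscillatoryIntegral

lemma exists_abs_deriv_le_of_forall_ge_eq_zero {φ : ℝ → ℝ} (hφ : Continuous (deriv φ)) {a : ℝ}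
    (hzero : ∀ x, a ≤ x → φ x = 0) (c : ℝ) : ∃ D, ∀ y, c ≤ y → |deriv φ y| ≤ D := by
  obtain ⟨D, hD⟩ := isCompact_Icc.exists_bound_of_continuousOn (hφ.continuousOn (s := Icc c a))
  refine ⟨max D 0, fun y hcy => ?_⟩
  rcases le_or_gt y a with hya | hay
  · exact (hD y ⟨hcy, hya⟩).trans (le_max_left _ _)
  · have hlocal : φ =ᶠ[nhds y] fun _ => 0 := by
      filter_upwards [Ioi_mem_nhds hay] with x hx using hzero x hx.le
    simp [hlocal.deriv_eq]

section Cutoff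

variable {φ : ℝ → ℝ}

lemma abs_lpPsi_le_one (hφ_range : ∀ x, φ x ∈ Icc (0 : ℝ) 1) (M lam : ℝ) :
    |lpPsi φ M lam| ≤ 1 := by
  obtain ⟨h₁, h₁'⟩ := hφ_range (lam / M)
  obtain ⟨h₂, h₂'⟩ := hφ_range (2 * lam / M)
  rw [lpPsi, abs_le]
  constructor <;> linarith

lemma abs_lpPsiTilde_le_three (hφ_range : ∀ x, φ x ∈ Icc (0 : ℝ) 1) (N lam : ℝ) :
    |lpPsiTilde φ N lam| ≤ 3 := by
  rw [lpPsiTilde]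
  linarith [abs_add_three (lpPsi φ (N / 2) lam) (lpPsi φ N lam) (lpPsi φ (2 * N) lam),
    abs_lpPsi_le_one hφ_range (N / 2) lam, abs_lpPsi_le_one hφ_range N lam,
    abs_lpPsi_le_one hφ_range (2 * N) lam]

lemma lpPsi_eq_zero_of_le (hφ_zero : ∀ x, 2 ≤ x → φ x = 0) {M lam : ℝ} (hM : 0 < M)
    (h : 2 * M ≤ lam) : lpPsi φ M lam = 0 := by
  have h₁ : 2 ≤ lam / M := by rw [le_div_iff₀ hM]; linarith
  have h₂ : 2 ≤ 2 * lam / M := by rw [le_div_iff₀ hM]; linarith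
  rw [lpPsi, hφ_zero _ h₁, hφ_zero _ h₂, sub_zero]

lemma lpPsiTilde_eq_zero_of_le (hφ_zero : ∀ x, 2 ≤ x → φ x = 0) {N lam : ℝ} (hN : 0 < N)
    (h : 4 * N ≤ lam) : lpPsiTilde φ N lam = 0 := by
  rw [lpPsiTilde, lpPsi_eq_zero_of_le hφ_zero (by positivity) (by linarith),
    lpPsi_eq_zero_of_le hφ_zero hN (by linarith),
    lpPsi_eq_zero_of_le hφ_zero (by positivity) (by linarith), add_zero, add_zero]

lemma contDiff_lpPsiTilde {n : WithTop ℕ∞} (hφ : ContDiff ℝ n φ) (N : ℝ) :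
    ContDiff ℝ n (lpPsiTilde φ N) := by
  unfold lpPsiTilde lpPsi
  fun_prop

lemma differentiable_lpPsiTilde (hφ : Differentiable ℝ φ) (N : ℝ) :
    Differentiable ℝ (lpPsiTilde φ N) := by
  unfold lpPsiTilde lpPsi
  fun_prop

lemma hasDerivAt_lpPsi (hφ : Differentiable ℝ φ) (M x : ℝ) :
    HasDerivAt (lpPsi φ M) ((deriv φ (x / M) - 2 * deriv φ (2 * x / M)) / M) x := by
  have h₁ := (hφ (x / M)).hasDerivAt.comp x ((hasDerivAt_id x).div_const M)
  have h₂ := (hφ (2 * x / M)).hasDerivAt.comp x (((hasDerivAt_id x).const_mul 2).div_const M)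
  exact (h₁.sub h₂).congr_deriv (by ring)

variable {D : ℝ}

lemma abs_deriv_lpPsi_le (hφ : Differentiable ℝ φ) (hD : ∀ y, 0 ≤ y → |deriv φ y| ≤ D)
    {M x : ℝ} (hM : 0 < M) (hx : 0 ≤ x) : |deriv (lpPsi φ M) x| ≤ 3 * D / M := by
  rw [(hasDerivAt_lpPsi hφ M x).deriv, abs_div, abs_of_pos hM]
  gcongr
  calc |deriv φ (x / M) - 2 * deriv φ (2 * x / M)|
      ≤ |deriv φ (x / M)| + 2 * |deriv φ (2 * x / M)| := by
        simpa [abs_mul] using abs_sub (deriv φ (x / M)) (2 * deriv φ (2 * x / M))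
    _ ≤ 3 * D := by linarith [hD (x / M) (by positivity), hD (2 * x / M) (by positivity)]

lemma abs_deriv_lpPsiTilde_le (hφ : Differentiable ℝ φ) (hD : ∀ y, 0 ≤ y → |deriv φ y| ≤ D)
    {N x : ℝ} (hN : 0 < N) (hx : 0 ≤ x) : |deriv (lpPsiTilde φ N) x| ≤ 21 * D / (2 * N) := by
  have hderiv := (((hasDerivAt_lpPsi hφ (N / 2) x).add (hasDerivAt_lpPsi hφ N x)).add
    (hasDerivAt_lpPsi hφ (2 * N) x))
  rw [show lpPsiTilde φ N = lpPsi φ (N / 2) + lpPsi φ N + lpPsi φ (2 * N) from rfl,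
    hderiv.deriv, ← (hasDerivAt_lpPsi hφ (N / 2) x).deriv, ← (hasDerivAt_lpPsi hφ N x).deriv,
    ← (hasDerivAt_lpPsi hφ (2 * N) x).deriv]
  calc _ ≤ 3 * D / (N / 2) + 3 * D / N + 3 * D / (2 * N) :=
        (abs_add_three _ _ _).trans <| add_le_add_three
          (abs_deriv_lpPsi_le hφ hD (by positivity) hx) (abs_deriv_lpPsi_le hφ hD hN hx)
          (abs_deriv_lpPsi_le hφ hD (by positivity) hx)
    _ = 21 * D / (2 * N) := by field_simp; ring

end Cutoff

lemma abs_deriv_mul_mul_le {u v w : ℝ → ℝ} {x A B C A' B' C' : ℝ} (hu : DifferentiableAt ℝ u x)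
    (hv : DifferentiableAt ℝ v x) (hw : DifferentiableAt ℝ w x) (hA : |u x| ≤ A)
    (hB : |v x| ≤ B) (hC : |w x| ≤ C) (hA' : |deriv u x| ≤ A') (hB' : |deriv v x| ≤ B')
    (hC' : |deriv w x| ≤ C') :
    |deriv (u * v * w) x| ≤ A' * B * C + A * B' * C + A * B * C' := by
  have hA₀ : 0 ≤ A := (abs_nonneg _).trans hA
  have hB₀ : 0 ≤ B := (abs_nonneg _).trans hB
  have hA'₀ : 0 ≤ A' := (abs_nonneg _).trans hA'
  have hB'₀ : 0 ≤ B' := (abs_nonneg _).trans hB'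
  rw [((hu.hasDerivAt.mul hv.hasDerivAt).mul hw.hasDerivAt).deriv, add_mul]
  refine (abs_add_three _ _ _).trans (add_le_add_three ?_ ?_ ?_) <;>
    simp only [Pi.mul_apply, abs_mul] <;> gcongr

/-- The generalized eigenfunction `e_λ(r)` of the exterior Dirichlet Laplacian. -/
noncomputable def exteriorEigenfunction (r lam : ℝ) : ℝ :=
  Real.sin (lam * (r - 1)) / r

section Eigenfunction

variable {r : ℝ}

lemma abs_exteriorEigenfunction_le (hr : 1 ≤ r) {lam : ℝ} (hlam : 0 ≤ lam) :
    |exteriorEigenfunction r lam| ≤ lam := by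
  have hr₀ : 0 < r := by linarith
  rw [exteriorEigenfunction, abs_div, abs_of_pos hr₀, div_le_iff₀ hr₀]
  calc |Real.sin (lam * (r - 1))| ≤ |lam * (r - 1)| := Real.abs_sin_le_abs
    _ = lam * (r - 1) := abs_of_nonneg (mul_nonneg hlam (by linarith))
    _ ≤ lam * r := by nlinarith

lemma hasDerivAt_exteriorEigenfunction (r lam : ℝ) :
    HasDerivAt (exteriorEigenfunction r) (Real.cos (lam * (r - 1)) * (r - 1) / r) lam :=
  ((hasDerivAt_mul_const (r - 1)).sin).div_const r

lemma abs_deriv_exteriorEigenfunction_le (hr : 1 ≤ r) (lam : ℝ) :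
    |deriv (exteriorEigenfunction r) lam| ≤ 1 := by
  have hr₀ : 0 < r := by linarith
  rw [(hasDerivAt_exteriorEigenfunction r lam).deriv, abs_div, abs_mul, abs_of_pos hr₀,
    abs_of_nonneg (by linarith : (0 : ℝ) ≤ r - 1), div_le_one hr₀]
  nlinarith [Real.abs_cos_le_one (lam * (r - 1)), abs_nonneg (Real.cos (lam * (r - 1)))]

end Eigenfunction

noncomputable def halfWaveAmplitude (φ : ℝ → ℝ) (N r s lam : ℝ) : ℝ :=
  exteriorEigenfunction r lam * exteriorEigenfunction s lam * lpPsiTilde φ N lam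

section Amplitude

variable {φ : ℝ → ℝ} {N r s : ℝ}

lemma halfWaveKernel_eq_integral_halfWaveAmplitude (φ : ℝ → ℝ) (N t r s : ℝ) :
    halfWaveKernel φ N t r s = ((2 / Real.pi : ℝ) : ℂ) * ∫ lam in Ioi (0 : ℝ),
      (halfWaveAmplitude φ N r s lam : ℂ) * Complex.exp (Complex.I * lam * t) := by
  rw [halfWaveKernel]
  congr 1
  refine integral_congr_ae (Filter.Eventually.of_forall fun lam => ?_)
  simp only [halfWaveAmplitude, exteriorEigenfunction]
  push_cast
  ring

lemma contDiff_halfWaveAmplitude {n : WithTop ℕ∞} (hφ : ContDiff ℝ n φ) (N r s : ℝ) :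
    ContDiff ℝ n (halfWaveAmplitude φ N r s) := by
  have hψ := contDiff_lpPsiTilde hφ N
  unfold halfWaveAmplitude exteriorEigenfunction
  fun_prop

lemma halfWaveAmplitude_zero (φ : ℝ → ℝ) (N r s : ℝ) : halfWaveAmplitude φ N r s 0 = 0 := by
  simp [halfWaveAmplitude, exteriorEigenfunction]

lemma halfWaveAmplitude_eq_zero_of_le (hφ_zero : ∀ x, 2 ≤ x → φ x = 0) (hN : 0 < N) {lam : ℝ}
    (h : 4 * N ≤ lam) : halfWaveAmplitude φ N r s lam = 0 := by
  rw [halfWaveAmplitude, lpPsiTilde_eq_zero_of_le hφ_zero hN h, mul_zero]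

lemma abs_deriv_halfWaveAmplitude_le (hφ : Differentiable ℝ φ)
    (hφ_range : ∀ x, φ x ∈ Icc (0 : ℝ) 1) {D : ℝ} (hD : ∀ y, 0 ≤ y → |deriv φ y| ≤ D)
    (hN : 0 < N) (hr : 1 ≤ r) (hs : 1 ≤ s) {x : ℝ} (hx₀ : 0 ≤ x) (hx : x ≤ 4 * N) :
    |deriv (halfWaveAmplitude φ N r s) x| ≤ (24 + 168 * D) * N := by
  have hbound := abs_deriv_mul_mul_le (hasDerivAt_exteriorEigenfunction r x).differentiableAt
    (hasDerivAt_exteriorEigenfunction s x).differentiableAt (differentiable_lpPsiTilde hφ N x)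
    ((abs_exteriorEigenfunction_le hr hx₀).trans hx)
    ((abs_exteriorEigenfunction_le hs hx₀).trans hx)
    (abs_lpPsiTilde_le_three hφ_range N x) (abs_deriv_exteriorEigenfunction_le hr x)
    (abs_deriv_exteriorEigenfunction_le hs x) (abs_deriv_lpPsiTilde_le hφ hD hN hx₀)
  refine hbound.trans_eq ?_
  field_simp
  ring

end Amplitude

theorem halfWaveKernel_dispersive_bound_general
    (φ : ℝ → ℝ) (hφ : ContDiff ℝ (⊤ : ℕ∞) φ)
    (hφ_range : ∀ x : ℝ, φ x ∈ Icc (0 : ℝ) 1)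
    (hφ_zero : ∀ x : ℝ, 2 ≤ x → φ x = 0) :
    ∃ C : ℝ, 0 < C ∧
      ∀ N : ℝ, 0 < N → ∀ t : ℝ, t ≠ 0 → ∀ r s : ℝ, 1 ≤ r → 1 ≤ s →
        ‖halfWaveKernel φ N t r s‖ ≤ C * N ^ 2 / |t| := by
  have hφd : Differentiable ℝ φ := hφ.differentiable (by simp)
  obtain ⟨D, hD⟩ :=
    exists_abs_deriv_le_of_forall_ge_eq_zero (hφ.continuous_deriv (by simp)) hφ_zero 0
  have hD₀ : 0 ≤ D := (abs_nonneg _).trans (hD 0 le_rfl)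
  refine ⟨4 * (24 + 168 * D), by positivity, fun N hN t ht r s hr hs => ?_⟩
  set G := halfWaveAmplitude φ N r s
  have hG : ContDiff ℝ 1 G := contDiff_halfWaveAmplitude (hφ.of_le (by simp)) N r s
  have hosc := norm_integral_Ioi_mul_cexp_le (g := fun x => (G x : ℂ))
    (g' := fun x => ((deriv G x : ℝ) : ℂ)) (by positivity : 0 ≤ 4 * N) ht
    (fun x _ => (hG.differentiable one_ne_zero x).hasDerivAt.ofReal_comp)
    ((Complex.continuous_ofReal.comp (hG.continuous_deriv le_rfl)).intervalIntegrable _ _)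
    (by simp [G, halfWaveAmplitude_zero])
    (fun x hx => by simp [G, halfWaveAmplitude_eq_zero_of_le hφ_zero hN hx])
    (fun x hx => by
      rw [Complex.norm_real, Real.norm_eq_abs]
      exact abs_deriv_halfWaveAmplitude_le hφd hφ_range hD hN hr hs hx.1.le hx.2)
  have h2π : 2 / Real.pi ≤ 1 := (div_le_one Real.pi_pos).mpr Real.two_le_pi
  rw [halfWaveKernel_eq_integral_halfWaveAmplitude, norm_mul, Complex.norm_real,
    Real.norm_of_nonneg (by positivity)]
  calc 2 / Real.pi * ‖∫ x in Ioi 0, (G x : ℂ) * Complex.exp (Complex.I * x * t)‖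
      ≤ 1 * ((24 + 168 * D) * N * (4 * N) / |t|) := by gcongr
    _ = 4 * (24 + 168 * D) * N ^ 2 / |t| := by ring

/-- Dispersive kernel bound: there is `C = C(φ)` such that for all
`N > 0`, all `t ≠ 0` and all `r, s ≥ 1`, `|K_N(t,r,s)| ≤ C N² / |t|`. -/
theorem halfWaveKernel_dispersive_bound
    (φ : ℝ → ℝ) (hφ : ContDiff ℝ (⊤ : ℕ∞) φ)
    (hφ_range : ∀ x : ℝ, φ x ∈ Icc (0 : ℝ) 1)
    (hφ_one : ∀ x ∈ Icc (0 : ℝ) 1, φ x = 1)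
    (hφ_zero : ∀ x : ℝ, 2 ≤ x → φ x = 0) :
    ∃ C : ℝ, 0 < C ∧
      ∀ N : ℝ, 0 < N → ∀ t : ℝ, t ≠ 0 → ∀ r s : ℝ, 1 ≤ r → 1 ≤ s →
        ‖halfWaveKernel φ N t r s‖ ≤ C * N ^ 2 / |t| :=
  halfWaveKernel_dispersive_bound_general φ hφ hφ_range hφ_zero
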